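/- In the polynomial ring ℚ[u1,u2,u3,v1,v2,v3], the polynomials x0, x1, ..., x6 defined in the context satisfy: x0 = q0(u)(v) and (1/2)(x1² + x2² + x3² + x4² + x5² + x6²) = q∞(u)(v), where q0(u)(v) = u3(u2−u1)v1v2 + u2(u1−u3)v1v3 + u1(u3−u2)v2v3 and q∞(u)(v) = (1/6)(4(u2²−u2u3+u3²)v1² + 4(u1²−u1u3+u3²)v2² + 4(u1²−u1u2+u2²)v3² + 2(u3(u1+u2)−2u1u2−2u3²)v1v2 + 2(u2(u1+u3)−2u1u3−2u2²)v1v3 + 2(u1(u2+u3)−2u2u3−2u1²)v2v3). (Consequently the birational image in ℙ²×ℙ² of the threefold 𝒳_τ is the Verra threefold of bidegree (2,2) with equation q0(u)(v) + τ·q∞(u)(v) = 0, Proposition 3.10.) -/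
import Mathlib


open MvPolynomial

namespace Stmt3

noncomputable section

/-- The polynomial ring ℚ[u1,u2,u3,v1,v2,v3]. -/
abbrev R : Type := MvPolynomial (Fin 6) ℚ

def u1 : R := X 0
def u2 : R := X 1
def u3 : R := X 2
def v1 : R := X 3
def v2 : R := X 4
def v3 : R := X 5

def x0 : R :=
  -u1*u3*v1*v2 - u1*u2*v2*v3 - u2*u3*v1*v3 + u1*u2*v1*v3 + u2*u3*v1*v2 + u1*u3*v2*v3
def x1 : R := C (1/3 : ℚ) * (u2*v3 - 2*u3*v1 - 2*u1*v2 + u3*v2 + u1*v3 + u2*v1)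
def x2 : R := C (1/3 : ℚ) * (-2*u2*v3 + u3*v1 - 2*u1*v2 + u3*v2 + u1*v3 + u2*v1)
def x3 : R := C (1/3 : ℚ) * (-2*u2*v3 - 2*u3*v1 + u1*v2 + u3*v2 + u1*v3 + u2*v1)
def x4 : R := C (1/3 : ℚ) * (u2*v3 + u3*v1 + u1*v2 + u3*v2 - 2*u1*v3 - 2*u2*v1)
def x5 : R := C (1/3 : ℚ) * (u2*v3 + u3*v1 + u1*v2 - 2*u3*v2 + u1*v3 - 2*u2*v1)
def x6 : R := C (1/3 : ℚ) * (u2*v3 + u3*v1 + u1*v2 - 2*u3*v2 - 2*u1*v3 + u2*v1)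

/-- The quadratic form q0(u) evaluated at v. -/
def q0v : R := u3*(u2 - u1)*v1*v2 + u2*(u1 - u3)*v1*v3 + u1*(u3 - u2)*v2*v3

/-- The quadratic form q∞(u) evaluated at v. -/
def qinfv : R :=
  C (1/6 : ℚ) *
    (4*(u2^2 - u2*u3 + u3^2)*v1^2 + 4*(u1^2 - u1*u3 + u3^2)*v2^2 +
      4*(u1^2 - u1*u2 + u2^2)*v3^2 +
      2*(u3*(u1 + u2) - 2*u1*u2 - 2*u3^2)*v1*v2 +
      2*(u2*(u1 + u3) - 2*u1*u3 - 2*u2^2)*v1*v3 +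
      2*(u1*(u2 + u3) - 2*u2*u3 - 2*u1^2)*v2*v3)

end

/-- Proposition 3.10: the image in ℙ²×ℙ² of the threefold 𝒳_τ is the Verra threefold
q0(u)(v) + τ·q∞(u)(v) = 0; equivalently, x0 = q0(u)(v) and
(1/2)(x1²+⋯+x6²) = q∞(u)(v). -/
theorem verra_threefold_formulas :
    x0 = q0v ∧
    C (1/2 : ℚ) * (x1 ^ 2 + x2 ^ 2 + x3 ^ 2 + x4 ^ 2 + x5 ^ 2 + x6 ^ 2) = qinfv := by
  have c1 : (C (1/2 : ℚ) : R) * C (1/3 : ℚ) ^ 2 = C (1/18 : ℚ) := by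
    rw [← C_pow, ← C_mul]; norm_num
  have c2 : (C (1/6 : ℚ) : R) = C (1/18 : ℚ) * 3 := by
    rw [show ((3 : R)) = C (3 : ℚ) from (map_ofNat (C : ℚ →+* R) 3).symm, ← C_mul]; norm_num
  constructor
  · simp only [x0, q0v, u1, u2, u3, v1, v2, v3]; ring
  · simp only [x1, x2, x3, x4, x5, x6, qinfv, u1, u2, u3, v1, v2, v3, c2]
    ring_nf
    rw [c1]
    ring

end Stmt3
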